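/- arXiv:2505.13285 — 2 statements merged into one kernel-verified Lean document; each statement's English description precedes it below -/
import Mathlib

section
/- Let K₁ ⊆ ℂ be a connected compact set with 1 ∈ K₁, −1 ∈ K₁, diameter d(K₁) = 2, and minimal width w = w(K₁) < 3/7. For every integer m ≥ 100, the polynomial P_m(z) = (z − 1)·(z² − 1)^m satisfies ‖P_m'‖ ≤ 7 · max{w·n, 2·√n} · ‖P_m‖, where n = 2m + 1 and ‖f‖ = sup_{z∈K₁} |f(z)|. -/
open Polynomial

/-- The sup-norm of a polynomial over a set `K ⊆ ℂ`. -/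
noncomputable def polyNorm (K : Set ℂ) (P : Polynomial ℂ) : ℝ :=
  sSup ((fun z => ‖P.eval z‖) '' K)

/-- The Tur\'an type inverse Markov factor
`M_n(K) = inf { ‖P'‖_K / ‖P‖_K : P of exact degree n with all zeros in K }`. -/
noncomputable def invMarkov (n : ℕ) (K : Set ℂ) : ℝ :=
  sInf { r : ℝ | ∃ P : Polynomial ℂ, P ≠ 0 ∧ P.natDegree = n ∧
    (∀ z : ℂ, P.IsRoot z → z ∈ K) ∧
    r = polyNorm K (Polynomial.derivative P) / polyNorm K P }

/-- The minimal width of a set `K ⊆ ℂ`: the infimum over unit directions `u` of the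
width of `K` in direction `u`. -/
noncomputable def minWidth (K : Set ℂ) : ℝ :=
  sInf { r : ℝ | ∃ u : ℂ, ‖u‖ = 1 ∧
    r = sSup ((fun z => ((starRingEnd ℂ) u * z).re) '' K)
      - sInf ((fun z => ((starRingEnd ℂ) u * z).re) '' K) }

/-!
Put `P_m = turanPoly m`, `x = Re z` and `n = 2m + 1`, so that `|P_m(z)| = |z - 1| |z² - 1|^m` and
`|P_m'(z)| = |z - 1| |z² - 1|^(m-1) |n z + 1|`. Since `K₁` is connected it meets the imaginary
axis, where `|z ∓ 1| ≥ 1`, so `‖P_m‖ ≥ 1`. Since `diam K₁ = 2` and `±1 ∈ K₁`, every `z ∈ K₁` has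
`|x| ≤ 1`, and a strip of width `r ≤ 3/7` containing `±1` and `z` forces `|Im z| ≤ 1.1 r`.
The bound is then proved pointwise. Where `|z² - 1| ≤ 1/2`, the factor `|z² - 1|^(m-1)` makes
`|P_m'(z)|` tiny. Where `|z² - 1| > 1/2` and `x² ≤ 6 (Im z)²`, we have
`|P_m'(z)| ≤ 2 |n z + 1| |P_m(z)|` and `|n z + 1| ≲ n |Im z| ≲ w n`. Where `6 (Im z)² ≤ x²`,
`|z² - 1|² ≤ 1 - 3x²/10`, and Bernoulli's inequality `(1 - s)^k (1 + k s) ≤ 1` balances this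
decay against `|n z + 1|² ≲ n² x²`, giving `|P_m'(z)| ≤ 14 √n`.
-/

open ComplexConjugate

section PolyNorm

variable {K : Set ℂ}

lemma norm_eval_le_polyNorm (hK : IsCompact K) (P : ℂ[X]) {z : ℂ} (hz : z ∈ K) :
    ‖P.eval z‖ ≤ polyNorm K P :=
  le_csSup (hK.image (continuous_norm.comp P.continuous)).bddAbove ⟨z, hz, rfl⟩

lemma polyNorm_le (hK : K.Nonempty) {P : ℂ[X]} {c : ℝ} (h : ∀ z ∈ K, ‖P.eval z‖ ≤ c) :
    polyNorm K P ≤ c :=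
  csSup_le (hK.image _) (by rintro _ ⟨z, hz, rfl⟩; exact h z hz)

end PolyNorm

section ComplexNorms

variable {z : ℂ}

lemma sq_norm_sub_one (z : ℂ) : ‖z - 1‖ ^ 2 = (z.re - 1) ^ 2 + z.im ^ 2 := by
  simp [Complex.sq_norm, Complex.normSq_apply]; ring

lemma sq_norm_add_one (z : ℂ) : ‖z + 1‖ ^ 2 = (z.re + 1) ^ 2 + z.im ^ 2 := by
  simp [Complex.sq_norm, Complex.normSq_apply]; ring

lemma sq_norm_ofReal_mul_add_one (c : ℝ) (z : ℂ) :
    ‖(c : ℂ) * z + 1‖ ^ 2 = (c * z.re + 1) ^ 2 + (c * z.im) ^ 2 := by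
  simp [Complex.sq_norm, Complex.normSq_apply]; ring

lemma norm_le_two_of_norm_sub_one_le (h1 : ‖z - 1‖ ≤ 2) (h2 : ‖z + 1‖ ≤ 2) : ‖z‖ ≤ 2 := by
  have : 2 * ‖z‖ ≤ ‖z - 1‖ + ‖z + 1‖ :=
    calc 2 * ‖z‖ = ‖(z - 1) + (z + 1)‖ := by
          rw [← RCLike.norm_ofNat (K := ℂ) 2, ← norm_mul]; ring_nf
      _ ≤ ‖z - 1‖ + ‖z + 1‖ := norm_add_le _ _
  linarith

lemma abs_re_le_one_of_norm_sub_one_le (h1 : ‖z - 1‖ ≤ 2) (h2 : ‖z + 1‖ ≤ 2) : |z.re| ≤ 1 := by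
  have hA := (Complex.abs_re_le_norm (z - 1)).trans h1
  have hB := (Complex.abs_re_le_norm (z + 1)).trans h2
  simp only [Complex.sub_re, Complex.add_re, Complex.one_re, abs_le] at hA hB ⊢
  constructor <;> linarith

lemma sq_norm_sub_one_mul_norm_add_one_le (hre : z.re ^ 2 ≤ 1) (hflat : 6 * z.im ^ 2 ≤ z.re ^ 2) :
    (‖z - 1‖ * ‖z + 1‖) ^ 2 ≤ 1 - 3 / 10 * z.re ^ 2 := by
  rw [mul_pow, sq_norm_sub_one, sq_norm_add_one]
  nlinarith [mul_le_mul_of_nonneg_left hre (sq_nonneg z.re),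
    mul_le_mul_of_nonneg_left hflat (sq_nonneg z.im), sq_nonneg z.im]

end ComplexNorms

lemma one_sub_pow_mul_one_add_mul_le_one {s : ℝ} (hs0 : 0 ≤ s) (hs1 : s ≤ 1) (k : ℕ) :
    (1 - s) ^ k * (1 + k * s) ≤ 1 :=
  calc (1 - s) ^ k * (1 + k * s) ≤ (1 - s) ^ k * (1 + s) ^ k :=
        mul_le_mul_of_nonneg_left (one_add_mul_le_pow (by linarith) k) (pow_nonneg (by linarith) k)
    _ = (1 - s ^ 2) ^ k := by rw [← mul_pow]; ring
    _ ≤ 1 := pow_le_one₀ (by nlinarith) (by nlinarith)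

noncomputable def turanPoly (m : ℕ) : ℂ[X] := (X - 1) * (X ^ 2 - 1) ^ m

lemma norm_eval_turanPoly (m : ℕ) (z : ℂ) :
    ‖(turanPoly m).eval z‖ = ‖z - 1‖ * (‖z - 1‖ * ‖z + 1‖) ^ m := by
  have : (turanPoly m).eval z = (z - 1) * ((z - 1) * (z + 1)) ^ m := by
    simp only [turanPoly, eval_mul, eval_pow, eval_sub, eval_one, eval_X]; ring
  rw [this, norm_mul, norm_pow, norm_mul]

lemma norm_eval_derivative_turanPoly {m : ℕ} (hm : 1 ≤ m) (z : ℂ) :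
    ‖(derivative (turanPoly m)).eval z‖ =
      ‖z - 1‖ * (‖z - 1‖ * ‖z + 1‖) ^ (m - 1) * ‖((2 * m + 1 : ℝ) : ℂ) * z + 1‖ := by
  have : (derivative (turanPoly m)).eval z =
      (z - 1) * ((z - 1) * (z + 1)) ^ (m - 1) * ((2 * m + 1 : ℝ) * z + 1) := by
    obtain ⟨k, rfl⟩ := Nat.exists_eq_add_of_le' hm
    simp only [turanPoly, derivative_mul, derivative_pow, derivative_sub, derivative_one,
      derivative_X, Nat.add_sub_cancel, eval_mul, eval_add, eval_sub, eval_pow, eval_one,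
      eval_X, eval_C, eval_zero, eval_natCast, map_natCast, Nat.cast_ofNat]
    push_cast
    ring
  rw [this, norm_mul, norm_mul, norm_pow, norm_mul]

lemma exists_re_eq_zero {K : Set ℂ} (hK : IsPreconnected K) (h1 : (1 : ℂ) ∈ K)
    (hm1 : (-1 : ℂ) ∈ K) : ∃ z ∈ K, z.re = 0 :=
  (hK.image _ Complex.continuous_re.continuousOn).Icc_subset ⟨-1, hm1, by simp⟩ ⟨1, h1, by simp⟩
    (show (0 : ℝ) ∈ Set.Icc (-1) 1 by norm_num)

lemma one_le_polyNorm_turanPoly {K : Set ℂ} (hK : IsCompact K) (hconn : IsPreconnected K)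
    (h1 : (1 : ℂ) ∈ K) (hm1 : (-1 : ℂ) ∈ K) (m : ℕ) : 1 ≤ polyNorm K (turanPoly m) := by
  obtain ⟨z, hz, hre⟩ := exists_re_eq_zero hconn h1 hm1
  have hA : 1 ≤ ‖z - 1‖ := by simpa [hre] using Complex.abs_re_le_norm (z - 1)
  have hB : 1 ≤ ‖z + 1‖ := by simpa [hre] using Complex.abs_re_le_norm (z + 1)
  calc 1 ≤ ‖z - 1‖ * (‖z - 1‖ * ‖z + 1‖) ^ m :=
        one_le_mul_of_one_le_of_one_le hA (one_le_pow₀ (one_le_mul_of_one_le_of_one_le hA hB))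
    _ = ‖(turanPoly m).eval z‖ := (norm_eval_turanPoly m z).symm
    _ ≤ polyNorm K (turanPoly m) := norm_eval_le_polyNorm hK _ hz

noncomputable def widthIn (K : Set ℂ) (u : ℂ) : ℝ :=
  sSup ((fun z => (conj u * z).re) '' K) - sInf ((fun z => (conj u * z).re) '' K)

section Width

variable {K : Set ℂ}

lemma re_conj_mul_mem_Icc (hK : IsCompact K) (u : ℂ) {z : ℂ} (hz : z ∈ K) :
    (conj u * z).re ∈
      Set.Icc (sInf ((fun z => (conj u * z).re) '' K)) (sSup ((fun z => (conj u * z).re) '' K)) :=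
  have hbdd := hK.image (Complex.continuous_re.comp (continuous_const.mul continuous_id))
  ⟨csInf_le hbdd.bddBelow ⟨z, hz, rfl⟩, le_csSup hbdd.bddAbove ⟨z, hz, rfl⟩⟩

lemma widthIn_nonneg (hK : IsCompact K) (hne : K.Nonempty) (u : ℂ) : 0 ≤ widthIn K u := by
  obtain ⟨z, hz⟩ := hne
  have := re_conj_mul_mem_Icc hK u hz
  simp only [widthIn, Set.mem_Icc] at this ⊢
  linarith [this.1, this.2]

lemma exists_widthIn_lt (hK : IsCompact K) (hne : K.Nonempty) {c : ℝ} (hc : minWidth K < c) :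
    ∃ u : ℂ, ‖u‖ = 1 ∧ widthIn K u < c := by
  have hbdd : BddBelow {r : ℝ | ∃ u : ℂ, ‖u‖ = 1 ∧ r = widthIn K u} :=
    ⟨0, by rintro _ ⟨u, -, rfl⟩; exact widthIn_nonneg hK hne u⟩
  obtain ⟨_, ⟨u, hu, rfl⟩, hlt⟩ := (csInf_lt_iff hbdd ⟨_, 1, norm_one, rfl⟩).mp hc
  exact ⟨u, hu, hlt⟩

lemma sq_im_mul_le_widthIn (hK : IsCompact K) (h1 : (1 : ℂ) ∈ K) (hm1 : (-1 : ℂ) ∈ K)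
    {u : ℂ} (hu : ‖u‖ = 1) {z : ℂ} (hz : z ∈ K) (hre : |z.re| ≤ 1) :
    z.im ^ 2 * (4 - widthIn K u ^ 2) ≤ 4 * widthIn K u ^ 2 := by
  have hproj : ∀ w : ℂ, (conj u * w).re = u.re * w.re + u.im * w.im := fun w => by
    simp only [Complex.mul_re, Complex.conj_re, Complex.conj_im]; ring
  have hunit : u.re ^ 2 + u.im ^ 2 = 1 := by
    rw [← one_pow 2, ← hu, Complex.sq_norm, Complex.normSq_apply]; ring
  obtain ⟨hI1, hS1⟩ := re_conj_mul_mem_Icc hK u h1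
  obtain ⟨hIm1, hSm1⟩ := re_conj_mul_mem_Icc hK u hm1
  obtain ⟨hIz, hSz⟩ := re_conj_mul_mem_Icc hK u hz
  rw [hproj] at hI1 hS1 hIm1 hSm1 hIz hSz
  rw [widthIn]
  generalize sSup ((fun z => (conj u * z).re) '' K) = S at *
  generalize sInf ((fun z => (conj u * z).re) '' K) = I at *
  simp only [Complex.one_re, Complex.one_im, Complex.neg_re, Complex.neg_im] at hI1 hS1 hIm1 hSm1
  rw [abs_le] at hre
  have hre_u : 4 * u.re ^ 2 ≤ (S - I) ^ 2 := by nlinarith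
  have hx_u : I ≤ u.re * z.re ∧ u.re * z.re ≤ S := ⟨by nlinarith, by nlinarith⟩
  have him_u : (u.im * z.im) ^ 2 ≤ (S - I) ^ 2 := sq_le_sq' (by linarith) (by linarith)
  nlinarith [mul_le_mul_of_nonneg_left hre_u (sq_nonneg z.im)]

end Width

section PointwiseBounds

variable {m : ℕ} {z : ℂ}

lemma norm_eval_derivative_turanPoly_le_of_le_half (hm : 1 ≤ m) (hz1 : ‖z - 1‖ ≤ 2)
    (hz2 : ‖z + 1‖ ≤ 2) (hsmall : ‖z - 1‖ * ‖z + 1‖ ≤ 1 / 2) :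
    ‖(derivative (turanPoly m)).eval z‖ ≤ 14 := by
  rw [norm_eval_derivative_turanPoly hm]
  set ρ := ‖z - 1‖ * ‖z + 1‖
  have hm' : (1 : ℝ) ≤ m := by exact_mod_cast hm
  have hdecay : ρ ^ (m - 1) * m ≤ 1 := by
    have h2 : (m : ℝ) ≤ 2 ^ (m - 1) := by
      have : m - 1 < 2 ^ (m - 1) := Nat.lt_two_pow_self
      exact_mod_cast (by omega : m ≤ 2 ^ (m - 1))
    calc ρ ^ (m - 1) * m ≤ (1 / 2) ^ (m - 1) * 2 ^ (m - 1) :=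
          mul_le_mul (pow_le_pow_left₀ (by positivity) hsmall _) h2 (by positivity)
            (by positivity)
      _ = 1 := by rw [← mul_pow]; norm_num
  have hE : ‖((2 * m + 1 : ℝ) : ℂ) * z + 1‖ ≤ 7 * m :=
    calc ‖((2 * m + 1 : ℝ) : ℂ) * z + 1‖ ≤ (2 * m + 1) * ‖z‖ + 1 := by
          refine (norm_add_le _ _).trans ?_
          rw [norm_mul, Complex.norm_real, Real.norm_of_nonneg (by positivity), norm_one]
      _ ≤ (2 * m + 1) * 2 + 1 := by gcongr; exact norm_le_two_of_norm_sub_one_le hz1 hz2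
      _ ≤ 7 * m := by linarith
  calc ‖z - 1‖ * ρ ^ (m - 1) * ‖((2 * m + 1 : ℝ) : ℂ) * z + 1‖ ≤ 2 * ρ ^ (m - 1) * (7 * m) := by
        gcongr
    _ = 14 * (ρ ^ (m - 1) * m) := by ring
    _ ≤ 14 := by linarith

lemma norm_eval_derivative_turanPoly_le_of_half_lt (hm : 1 ≤ m)
    (hlarge : 1 / 2 < ‖z - 1‖ * ‖z + 1‖) :
    ‖(derivative (turanPoly m)).eval z‖ ≤
      2 * ‖(turanPoly m).eval z‖ * ‖((2 * m + 1 : ℝ) : ℂ) * z + 1‖ := by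
  rw [norm_eval_derivative_turanPoly hm, norm_eval_turanPoly]
  gcongr ?_ * _
  set ρ := ‖z - 1‖ * ‖z + 1‖
  rw [← Nat.sub_add_cancel hm, pow_succ, Nat.add_sub_cancel]
  have : 0 ≤ ‖z - 1‖ * ρ ^ (m - 1) := by positivity
  nlinarith

lemma norm_ofReal_mul_add_one_le {n W : ℝ} (hn : 0 ≤ n) (hre : z.re ≤ 1)
    (hsteep : z.re ^ 2 ≤ 6 * z.im ^ 2) (hy : 5 * (n * z.im) ^ 2 ≤ 6 * (W + 1) ^ 2)
    (hnW : 4 * n ≤ W ^ 2) (hW : 28 ≤ W) : ‖(n : ℂ) * z + 1‖ ≤ 7 / 2 * W := by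
  refine abs_le_of_sq_le_sq' ?_ (by positivity) |>.2
  rw [sq_norm_ofReal_mul_add_one]
  nlinarith [mul_le_mul_of_nonneg_left hsteep (sq_nonneg n), mul_le_mul_of_nonneg_left hre hn]

lemma norm_eval_derivative_turanPoly_le_of_flat (hm : 3 ≤ m) (hz1 : ‖z - 1‖ ≤ 2)
    (hz2 : ‖z + 1‖ ≤ 2) (hflat : 6 * z.im ^ 2 ≤ z.re ^ 2) :
    ‖(derivative (turanPoly m)).eval z‖ ≤ 14 * √(2 * m + 1) := by
  rw [norm_eval_derivative_turanPoly (by omega)]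
  have hre : z.re ^ 2 ≤ 1 :=
    (sq_le_one_iff_abs_le_one _).2 (abs_re_le_one_of_norm_sub_one_le hz1 hz2)
  set s := 3 / 10 * z.re ^ 2 with hs
  set E := ‖((2 * m + 1 : ℝ) : ℂ) * z + 1‖
  set Q := 1 + ((m - 1 : ℕ) : ℝ) * s with hQ_def
  have hQ : 0 < Q := by positivity
  have hm' : ((m - 1 : ℕ) : ℝ) = m - 1 := by push_cast [Nat.cast_sub (by omega : 1 ≤ m)]; ring
  have hdecay : ((‖z - 1‖ * ‖z + 1‖) ^ 2) ^ (m - 1) * Q ≤ 1 :=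
    calc ((‖z - 1‖ * ‖z + 1‖) ^ 2) ^ (m - 1) * Q ≤ (1 - s) ^ (m - 1) * Q := by
          gcongr; exact sq_norm_sub_one_mul_norm_add_one_le hre hflat
      _ ≤ 1 := one_sub_pow_mul_one_add_mul_le_one (by positivity) (by linarith [hs]) _
  have hE : 4 * E ^ 2 ≤ 196 * (2 * m + 1) * Q := by
    have hm3 : (3 : ℝ) ≤ m := by exact_mod_cast hm
    rw [sq_norm_ofReal_mul_add_one, hQ_def, hm', hs]
    nlinarith [mul_le_mul_of_nonneg_left hflat (sq_nonneg (2 * m + 1 : ℝ)),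
      sq_nonneg (z.re - 1), mul_nonneg (by linarith : (0 : ℝ) ≤ m - 3) (sq_nonneg z.re)]
  have hA : ‖z - 1‖ ^ 2 ≤ 4 := by nlinarith [norm_nonneg (z - 1)]
  refine abs_le_of_sq_le_sq' ?_ (by positivity) |>.2
  rw [mul_pow 14, Real.sq_sqrt (by positivity)]
  refine le_of_mul_le_mul_right ?_ hQ
  calc (‖z - 1‖ * (‖z - 1‖ * ‖z + 1‖) ^ (m - 1) * E) ^ 2 * Q
      = ‖z - 1‖ ^ 2 * E ^ 2 * (((‖z - 1‖ * ‖z + 1‖) ^ 2) ^ (m - 1) * Q) := by ring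
    _ ≤ 4 * E ^ 2 * 1 := by gcongr
    _ ≤ 14 ^ 2 * (2 * m + 1) * Q := by linarith

end PointwiseBounds

lemma norm_eval_derivative_turanPoly_le {m : ℕ} {z : ℂ} {W M : ℝ} (hm : 100 ≤ m)
    (hz1 : ‖z - 1‖ ≤ 2) (hz2 : ‖z + 1‖ ≤ 2)
    (hy : 5 * ((2 * m + 1) * z.im) ^ 2 ≤ 6 * (W + 1) ^ 2) (hW : 2 * √(2 * m + 1) ≤ W)
    (hM : 1 ≤ M) (hPM : ‖(turanPoly m).eval z‖ ≤ M) :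
    ‖(derivative (turanPoly m)).eval z‖ ≤ 7 * W * M := by
  have hm' : (100 : ℝ) ≤ m := by exact_mod_cast hm
  have h14 : 14 ≤ √(2 * m + 1) := Real.le_sqrt_of_sq_le (by linarith)
  have hW28 : 28 ≤ W := by linarith
  have hnW : 4 * (2 * m + 1) ≤ W ^ 2 := by
    calc 4 * (2 * m + 1 : ℝ) = (2 * √(2 * m + 1)) ^ 2 := by
          rw [mul_pow, Real.sq_sqrt (by positivity)]; ring
      _ ≤ W ^ 2 := by gcongr
  rcases le_or_gt (6 * z.im ^ 2) (z.re ^ 2) with hflat | hsteep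
  · calc ‖(derivative (turanPoly m)).eval z‖ ≤ 14 * √(2 * m + 1) :=
          norm_eval_derivative_turanPoly_le_of_flat (by omega) hz1 hz2 hflat
      _ ≤ 7 * W * 1 := by linarith
      _ ≤ 7 * W * M := by gcongr
  rcases le_or_gt (‖z - 1‖ * ‖z + 1‖) (1 / 2) with hsmall | hlarge
  · calc ‖(derivative (turanPoly m)).eval z‖ ≤ 14 :=
          norm_eval_derivative_turanPoly_le_of_le_half (by omega) hz1 hz2 hsmall
      _ ≤ 7 * W * M := by nlinarith
  · have hre := (abs_le.1 (abs_re_le_one_of_norm_sub_one_le hz1 hz2)).2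
    calc ‖(derivative (turanPoly m)).eval z‖
        ≤ 2 * ‖(turanPoly m).eval z‖ * ‖((2 * m + 1 : ℝ) : ℂ) * z + 1‖ :=
          norm_eval_derivative_turanPoly_le_of_half_lt (by omega) hlarge
      _ ≤ 2 * M * (7 / 2 * W) := by
          gcongr
          exact norm_ofReal_mul_add_one_le (by positivity) hre hsteep.le hy hnW hW28
      _ = 7 * W * M := by ring

theorem stmt_9 (K₁ : Set ℂ) (hK : IsCompact K₁) (hconn : IsConnected K₁)
    (h1 : (1 : ℂ) ∈ K₁) (hm1 : (-1 : ℂ) ∈ K₁) (hd : Metric.diam K₁ = 2)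
    (hw : minWidth K₁ < 3 / 7) (m : ℕ) (hm : 100 ≤ m) :
    polyNorm K₁
        (Polynomial.derivative (((X : Polynomial ℂ) - 1) * ((X : Polynomial ℂ) ^ 2 - 1) ^ m)) ≤
      7 * max (minWidth K₁ * (2 * m + 1)) (2 * Real.sqrt (2 * m + 1)) *
        polyNorm K₁ (((X : Polynomial ℂ) - 1) * ((X : Polynomial ℂ) ^ 2 - 1) ^ m) := by
  set n : ℝ := 2 * m + 1
  set W := max (minWidth K₁ * n) (2 * √n)
  have hn : 0 < n := by positivity
  obtain ⟨u, hu, hwidth⟩ :=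
    exists_widthIn_lt hK hconn.nonempty (lt_min hw (lt_add_of_pos_right _ (one_div_pos.2 hn)))
  set r := widthIn K₁ u
  have hr0 : 0 ≤ r := widthIn_nonneg hK hconn.nonempty u
  have hr37 : r ≤ 3 / 7 := (hwidth.trans_le (min_le_left _ _)).le
  have hrn : r * n ≤ W + 1 := by
    have := mul_le_mul_of_nonneg_right (hwidth.trans_le (min_le_right _ _)).le hn.le
    rw [add_mul, one_div_mul_cancel hn.ne'] at this
    linarith [le_max_left (minWidth K₁ * n) (2 * √n)]
  refine polyNorm_le (P := derivative (turanPoly m)) hconn.nonempty fun z hz => ?_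
  have hz1 : ‖z - 1‖ ≤ 2 := by
    simpa [hd, dist_eq_norm] using Metric.dist_le_diam_of_mem hK.isBounded hz h1
  have hz2 : ‖z + 1‖ ≤ 2 := by
    simpa [hd, dist_eq_norm] using Metric.dist_le_diam_of_mem hK.isBounded hz hm1
  have him : z.im ^ 2 * (4 - r ^ 2) ≤ 4 * r ^ 2 :=
    sq_im_mul_le_widthIn hK h1 hm1 hu hz (abs_re_le_one_of_norm_sub_one_le hz1 hz2)
  have hy : 5 * (n * z.im) ^ 2 ≤ 6 * (W + 1) ^ 2 := by
    have : 5 * z.im ^ 2 ≤ 6 * r ^ 2 := by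
      nlinarith [mul_le_mul_of_nonneg_left (pow_le_pow_left₀ hr0 hr37 2) (sq_nonneg z.im)]
    nlinarith [mul_le_mul_of_nonneg_left this (sq_nonneg n), pow_le_pow_left₀ (by positivity) hrn 2]
  exact norm_eval_derivative_turanPoly_le hm hz1 hz2 hy (le_max_right _ _)
    (one_le_polyNorm_turanPoly hK hconn.isPreconnected h1 hm1 m) (norm_eval_le_polyNorm hK _ hz)
end

section
/- Let K₁ ⊆ ℂ be a connected compact set with 1 ∈ K₁, −1 ∈ K₁, and diameter d(K₁) = 2, let m ≥ 1 be an integer, and suppose the norm ‖p_m‖ of p_m(z) = (z² − 1)^m is attained at z₀ ∈ K₁ (i.e. ‖p_m‖ = |p_m(z₀)|). Then |z₀ − 1| ≥ 1/2, where ‖f‖ = sup_{z∈K₁} |f(z)|. -/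
open Polynomial

/-
There is a point `z ∈ K₁` with `|z - 1| = 1`, by connectedness, and then `|z + 1| ≥ 1`, so
`‖p_m‖ ≥ |p_m(z)| ≥ 1`. Hence `|z₀ - 1| |z₀ + 1| ≥ 1`, while `|z₀ + 1| ≤ d(K₁) = 2`.
-/

theorem norm_eval_X_sq_sub_one_pow (m : ℕ) (z : ℂ) :
    ‖(((X : ℂ[X]) ^ 2 - 1) ^ m).eval z‖ = (‖z - 1‖ * ‖z + 1‖) ^ m := by
  simp [show z ^ 2 - 1 = (z - 1) * (z + 1) by ring]

theorem le_polyNorm_of_mem {K : Set ℂ} (hK : IsCompact K) (P : ℂ[X]) {z : ℂ} (hz : z ∈ K) :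
    ‖P.eval z‖ ≤ polyNorm K P :=
  le_csSup ((hK.image (continuous_norm.comp P.continuous)).bddAbove) ⟨z, hz, rfl⟩

theorem IsPreconnected.exists_norm_sub_eq {E : Type*} [SeminormedAddCommGroup E] {K : Set E}
    (hK : IsPreconnected K) {a b : E} (ha : a ∈ K) (hb : b ∈ K) (c : E) {r : ℝ}
    (har : ‖a - c‖ ≤ r) (hrb : r ≤ ‖b - c‖) : ∃ z ∈ K, ‖z - c‖ = r :=
  hK.intermediate_value ha hb (continuous_id.sub continuous_const).norm.continuousOn ⟨har, hrb⟩

theorem one_le_norm_add_one_of_norm_sub_one_eq_one {z : ℂ} (hz : ‖z - 1‖ = 1) :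
    1 ≤ ‖z + 1‖ := by
  have h := norm_sub_le (z + 1) (z - 1)
  rw [show z + 1 - (z - 1) = 2 by ring, hz] at h
  norm_num at h
  linarith

theorem stmt_14 (K₁ : Set ℂ) (hK : IsCompact K₁) (hconn : IsConnected K₁)
    (h1 : (1 : ℂ) ∈ K₁) (hm1 : (-1 : ℂ) ∈ K₁) (hd : Metric.diam K₁ = 2)
    (m : ℕ) (hm : 1 ≤ m) (z₀ : ℂ) (hz₀ : z₀ ∈ K₁)
    (hmax : polyNorm K₁ (((X : Polynomial ℂ) ^ 2 - 1) ^ m) =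
      ‖(((((X : Polynomial ℂ) ^ 2 - 1) ^ m)).eval z₀)‖) :
    1 / 2 ≤ ‖z₀ - 1‖ := by
  obtain ⟨z, hz, hz1⟩ := hconn.isPreconnected.exists_norm_sub_eq (r := 1) h1 hm1 1
    (by simp) (by norm_num)
  have hpow : 1 ≤ (‖z₀ - 1‖ * ‖z₀ + 1‖) ^ m := by
    rw [← norm_eval_X_sq_sub_one_pow, ← hmax]
    refine le_trans ?_ (le_polyNorm_of_mem hK _ hz)
    rw [norm_eval_X_sq_sub_one_pow, hz1, one_mul]
    exact one_le_pow₀ (one_le_norm_add_one_of_norm_sub_one_eq_one hz1)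
  have hprod : 1 ≤ ‖z₀ - 1‖ * ‖z₀ + 1‖ :=
    (one_le_pow_iff_of_nonneg (by positivity) (by omega)).mp hpow
  have hdiam : ‖z₀ + 1‖ ≤ 2 := by
    simpa [hd, dist_eq_norm] using Metric.dist_le_diam_of_mem hK.isBounded hz₀ hm1
  nlinarith [norm_nonneg (z₀ - 1)]
end
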